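/- arXiv:1407.2631 — 2 statements merged into one kernel-verified Lean document; each statement's English description precedes it below -/
import Mathlib

section
/- Let m ≥ 2 be an integer, λ = 1/m, and 1 ≤ p < ∞. Let u₀ : ℝ × ℝ² → ℝ² and ρ₀ : ℝ × ℝ² → ℝ be smooth and ℤ²-periodic in the space variable, with div_x u₀ = 0 and ∂_t ρ₀ + div_x(u₀ ρ₀) = 0 on [0,1] × ℝ². Assume: (i) ρ₀(1, x) = ρ₀(0, m x) for all x; (ii) ∫_{[0,1]²} ρ₀(0, x) dx = 0; (iii) ‖Du₀(t,·)‖_{L^p([0,1]²)} ≤ K for all t ∈ [0,1]; (iv) ∑_{k ∈ ℤ² \ {0}} (2π|k|)^{-2} |(ρ₀(t,·))^_k|² ≤ M² for all t ∈ [0,1], where (ρ₀(t,·))^_k = ∫_{[0,1]²} ρ₀(t,x) e^{-2πi k·x} dx. Define, for each n ∈ ℕ and t ∈ [n, n+1), u(t,x) = m^{-n} u₀(t - n, m^n x) and ρ(t,x) = ρ₀(t - n, m^n x). Then: (a) ρ is continuous on [0,∞) × ℝ² and ρ(0,·) = ρ₀(0,·); (b) for each n, on (n, n+1) × ℝ²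 the pair (u, ρ) is smooth, div_x u = 0, and ∂_t ρ + div_x(u ρ) = 0; (c) ‖Du(t,·)‖_{L^p([0,1]²)} ≤ K for all t ≥ 0; (d) for all t ≥ 0, (∑_{k ∈ ℤ² \ {0}} (2π|k|)^{-2} |(ρ(t,·))^_k|²)^{1/2} ≤ M λ^{t-1}. -/
open MeasureTheory Real

/-- Fourier coefficient of a `ℤ²`-periodic function `ℝ² → ℝ`, computed on the cell `[0,1]²`. -/
noncomputable def fourierCoeff2 (f : (Fin 2 → ℝ) → ℝ) (k : Fin 2 → ℤ) : ℂ :=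
  ∫ x in Set.Icc (0 : Fin 2 → ℝ) 1,
    (f x : ℂ) * Complex.exp (-(2 * (Real.pi : ℂ) * Complex.I) * ((∑ i, (k i : ℝ) * x i : ℝ) : ℂ))

/-- The square of the homogeneous `Ḣ^{-1}` seminorm (functional mixing scale):
`∑_{k ≠ 0} (2π|k|)⁻² |f̂_k|²`, valued in `[0,∞]`. -/
noncomputable def negSobolevSq (f : (Fin 2 → ℝ) → ℝ) : ENNReal :=
  ∑' k : {k : Fin 2 → ℤ // k ≠ 0},
    ENNReal.ofReal (((2 * Real.pi) ^ 2 * ∑ i, ((k.1 i : ℝ)) ^ 2)⁻¹ * ‖fourierCoeff2 f k.1‖ ^ 2)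


variable {V : Type*} [NormedAddCommGroup V] [NormedSpace ℝ V]

lemma oneD_shift (g : ℝ → V) (hper : Function.Periodic g 1) (v : ℝ) :
    ∫ b in Set.Icc (0:ℝ) 1, g (b + v) = ∫ b in Set.Icc (0:ℝ) 1, g b := by
  rw [MeasureTheory.integral_Icc_eq_integral_Ioc, MeasureTheory.integral_Icc_eq_integral_Ioc,
    ← intervalIntegral.integral_of_le (zero_le_one' ℝ), ← intervalIntegral.integral_of_le (zero_le_one' ℝ),
    intervalIntegral.integral_comp_add_right]
  simpa [add_comm] using hper.intervalIntegral_add_eq v 0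

lemma oneD_scale (g : ℝ → V) (hg : IntervalIntegrable g volume 0 1)
    (hgi : ∀ t₁ t₂, IntervalIntegrable g volume t₁ t₂)
    (hper : Function.Periodic g 1) (N : ℕ) (hN : 0 < N) :
    ∫ b in Set.Icc (0:ℝ) 1, g ((N:ℝ) * b) = ∫ b in Set.Icc (0:ℝ) 1, g b := by
  rw [MeasureTheory.integral_Icc_eq_integral_Ioc, MeasureTheory.integral_Icc_eq_integral_Ioc,
    ← intervalIntegral.integral_of_le (zero_le_one' ℝ), ← intervalIntegral.integral_of_le (zero_le_one' ℝ)]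
  have hc : (N:ℝ) ≠ 0 := Nat.cast_ne_zero.2 hN.ne'
  rw [intervalIntegral.integral_comp_mul_left g hc]
  have h2 : ∫ x in (0:ℝ)..(0 + (N:ℤ) • (1:ℝ)), g x = (N:ℤ) • ∫ x in (0:ℝ)..(0+1:ℝ), g x :=
    hper.intervalIntegral_add_zsmul_eq (N:ℤ) 0 hgi
  simp only [zero_add, smul_eq_mul, mul_one, mul_zero] at h2 ⊢
  rw [show ((N:ℤ) • (1:ℝ)) = (N:ℝ) by simp] at h2
  rw [h2, ← Int.cast_smul_eq_zsmul ℝ, smul_smul]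
  norm_num [hc]

variable {V : Type*} [NormedAddCommGroup V] [NormedSpace ℝ V]

lemma cube_preimage :
    (MeasurableEquiv.finTwoArrow : (Fin 2 → ℝ) ≃ᵐ ℝ × ℝ) ⁻¹' (Set.Icc (0:ℝ) 1 ×ˢ Set.Icc (0:ℝ) 1)
      = Set.Icc (0 : Fin 2 → ℝ) 1 := by
  ext x
  simp only [Set.mem_preimage, MeasurableEquiv.finTwoArrow_apply, Set.mem_prod, Set.mem_Icc,
    Pi.le_def]
  constructor
  · rintro ⟨⟨h1, h2⟩, h3, h4⟩
    refine ⟨fun i => ?_, fun i => ?_⟩ <;> fin_cases i <;> simpa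
  · rintro ⟨h1, h2⟩
    exact ⟨⟨h1 0, h2 0⟩, h1 1, h2 1⟩

lemma cube_eq (F : (Fin 2 → ℝ) → V) :
    ∫ x in Set.Icc (0 : Fin 2 → ℝ) 1, F x
      = ∫ z in Set.Icc (0:ℝ) 1 ×ˢ Set.Icc (0:ℝ) 1, F ![z.1, z.2] := by
  have h := (volume_preserving_finTwoArrow ℝ).setIntegral_preimage_emb
    (MeasurableEquiv.finTwoArrow.measurableEmbedding)
    (fun z => F ![z.1, z.2]) (Set.Icc (0:ℝ) 1 ×ˢ Set.Icc (0:ℝ) 1)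
  rw [cube_preimage] at h
  rw [← h]
  apply setIntegral_congr_fun (measurableSet_Icc)
  intro x _
  congr 1
  funext i
  fin_cases i <;> simp [MeasurableEquiv.finTwoArrow]

lemma vec_shift (a b : ℝ) (k : Fin 2 → ℤ) :
    (![a, b] + fun i => (k i : ℝ)) = ![a + (k 0 : ℝ), b + (k 1 : ℝ)] := by
  funext i; fin_cases i <;> simp

lemma cont_pair2 : Continuous fun z : ℝ × ℝ => ![z.1, z.2] := by
  apply continuous_pi
  intro i
  fin_cases i
  · exact continuous_fst
  · exact continuous_snd

lemma cube_fubini (F : (Fin 2 → ℝ) → V) (hF : Continuous F) :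
    ∫ x in Set.Icc (0 : Fin 2 → ℝ) 1, F x
      = ∫ a in Set.Icc (0:ℝ) 1, ∫ b in Set.Icc (0:ℝ) 1, F ![a, b] := by
  rw [cube_eq]
  apply MeasureTheory.setIntegral_prod
  apply ContinuousOn.integrableOn_compact (isCompact_Icc.prod isCompact_Icc)
  exact (hF.comp cont_pair2).continuousOn
lemma per_bounded (F : (Fin 2 → ℝ) → V) (hF : Continuous F)
    (hper : ∀ (x : Fin 2 → ℝ) (k : Fin 2 → ℤ), F (x + fun i => (k i : ℝ)) = F x) :
    ∃ C, ∀ x, ‖F x‖ ≤ C := by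
  obtain ⟨C, hC⟩ := (isCompact_Icc (a := (0 : Fin 2 → ℝ)) (b := 1)).exists_bound_of_continuousOn
    hF.continuousOn
  refine ⟨C, fun x => ?_⟩
  have hx : (fun i => Int.fract (x i)) ∈ Set.Icc (0 : Fin 2 → ℝ) 1 := by
    constructor <;> intro i
    · exact Int.fract_nonneg _
    · exact (Int.fract_lt_one _).le
  have hFx : F x = F (fun i => Int.fract (x i)) := by
    have h := hper (fun i => Int.fract (x i)) (fun i => ⌊x i⌋)
    rw [← h]
    congr 1
    funext i
    simp only [Pi.add_apply, Int.fract]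
    ring
  rw [hFx]
  exact hC _ hx

lemma cont_param (G : ℝ × ℝ → V) (hG : Continuous G) (C : ℝ) (hC : ∀ z, ‖G z‖ ≤ C) :
    Continuous fun a => ∫ b in Set.Icc (0:ℝ) 1, G (a, b) := by
  rw [continuous_iff_continuousAt]
  intro a₀
  apply MeasureTheory.continuousAt_of_dominated (bound := fun _ => C)
  · exact Filter.Eventually.of_forall fun a =>
      (hG.comp (Continuous.prodMk_right a)).aestronglyMeasurable
  · exact Filter.Eventually.of_forall fun a => ae_of_all _ fun b => hC _
  · refine MeasureTheory.integrableOn_const ?_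
    simp [Real.volume_Icc]
  · exact ae_of_all _ fun b => (hG.comp (continuous_id.prodMk continuous_const)).continuousAt
lemma per2_shift (F : (Fin 2 → ℝ) → V) (hF : Continuous F)
    (hper : ∀ (x : Fin 2 → ℝ) (k : Fin 2 → ℤ), F (x + fun i => (k i : ℝ)) = F x)
    (v : Fin 2 → ℝ) :
    ∫ x in Set.Icc (0 : Fin 2 → ℝ) 1, F (x + v) = ∫ x in Set.Icc (0 : Fin 2 → ℝ) 1, F x := by
  have hFv : Continuous fun x => F (x + v) := hF.comp (continuous_id.add continuous_const)
  rw [cube_fubini _ hFv, cube_fubini _ hF]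
  have hvec : ∀ a b : ℝ, ![a, b] + v = ![a + v 0, b + v 1] := by
    intro a b; funext i; fin_cases i <;> simp
  -- periodicity of slices
  have hslice : ∀ a b : ℝ, F ![a, b + 1] = F ![a, b] := by
    intro a b
    have h := hper ![a, b] ![0, 1]
    rw [← h]; congr 1; funext i; fin_cases i <;> simp
  have hslice' : ∀ a b : ℝ, F ![a + 1, b] = F ![a, b] := by
    intro a b
    have h := hper ![a, b] ![1, 0]
    rw [← h]; congr 1; funext i; fin_cases i <;> simp
  calc ∫ a in Set.Icc (0:ℝ) 1, ∫ b in Set.Icc (0:ℝ) 1, F (![a, b] + v)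
      = ∫ a in Set.Icc (0:ℝ) 1, ∫ b in Set.Icc (0:ℝ) 1, F ![a + v 0, b] := by
        apply setIntegral_congr_fun measurableSet_Icc
        intro a _
        simp only [hvec]
        exact oneD_shift (fun b => F ![a + v 0, b]) (fun b => hslice _ b) (v 1)
    _ = ∫ a in Set.Icc (0:ℝ) 1, ∫ b in Set.Icc (0:ℝ) 1, F ![a, b] := by
        exact oneD_shift (fun a => ∫ b in Set.Icc (0:ℝ) 1, F ![a, b])
          (fun a => by simp only [hslice']) (v 0)
lemma per2_scale (F : (Fin 2 → ℝ) → V) (hF : Continuous F)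
    (hper : ∀ (x : Fin 2 → ℝ) (k : Fin 2 → ℤ), F (x + fun i => (k i : ℝ)) = F x)
    (N : ℕ) (hN : 0 < N) :
    ∫ x in Set.Icc (0 : Fin 2 → ℝ) 1, F ((N:ℝ) • x) = ∫ x in Set.Icc (0 : Fin 2 → ℝ) 1, F x := by
  have hFN : Continuous fun x : Fin 2 → ℝ => F ((N:ℝ) • x) := hF.comp (continuous_const_smul (N:ℝ))
  rw [cube_fubini _ hFN, cube_fubini _ hF]
  have hvec : ∀ a b : ℝ, (N:ℝ) • ![a, b] = ![(N:ℝ) * a, (N:ℝ) * b] := by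
    intro a b; funext i; fin_cases i <;> simp
  have hslice : ∀ a b : ℝ, F ![a, b + 1] = F ![a, b] := by
    intro a b
    have h := hper ![a, b] ![0, 1]
    rw [← h]; congr 1; funext i; fin_cases i <;> simp
  have hslice' : ∀ a b : ℝ, F ![a + 1, b] = F ![a, b] := by
    intro a b
    have h := hper ![a, b] ![1, 0]
    rw [← h]; congr 1; funext i; fin_cases i <;> simp
  obtain ⟨C, hC⟩ := per_bounded F hF hper
  have hcont2 : ∀ c : ℝ, Continuous fun b => F ![c, b] := by
    intro c
    exact hF.comp (by
      apply continuous_pi; intro i; fin_cases i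
      · exact continuous_const
      · exact continuous_id)
  have hcontout : Continuous fun a => ∫ b in Set.Icc (0:ℝ) 1, F ![a, b] :=
    cont_param (fun z => F ![z.1, z.2]) (hF.comp cont_pair2) C (fun z => hC _)
  calc ∫ a in Set.Icc (0:ℝ) 1, ∫ b in Set.Icc (0:ℝ) 1, F ((N:ℝ) • ![a, b])
      = ∫ a in Set.Icc (0:ℝ) 1, ∫ b in Set.Icc (0:ℝ) 1, F ![(N:ℝ) * a, b] := by
        apply setIntegral_congr_fun measurableSet_Icc
        intro a _
        simp only [hvec]
        exact oneD_scale (fun b => F ![(N:ℝ) * a, b]) ((hcont2 _).intervalIntegrable _ _)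
          (fun t₁ t₂ => (hcont2 _).intervalIntegrable _ _) (fun b => hslice _ b) N hN
    _ = ∫ a in Set.Icc (0:ℝ) 1, ∫ b in Set.Icc (0:ℝ) 1, F ![a, b] := by
        exact oneD_scale (fun a => ∫ b in Set.Icc (0:ℝ) 1, F ![a, b])
          (hcontout.intervalIntegrable _ _) (fun t₁ t₂ => hcontout.intervalIntegrable _ _)
          (fun a => by simp only [hslice']) N hN
lemma exp_shift (k : Fin 2 → ℤ) (x : Fin 2 → ℝ) (l : Fin 2 → ℤ) :
    Complex.exp (-(2 * (Real.pi : ℂ) * Complex.I) * ((∑ i, (k i : ℝ) * (x i + (l i : ℝ)) : ℝ) : ℂ))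
      = Complex.exp (-(2 * (Real.pi : ℂ) * Complex.I) * ((∑ i, (k i : ℝ) * x i : ℝ) : ℂ)) := by
  have hs : (∑ i, (k i : ℝ) * (x i + (l i : ℝ)))
      = (∑ i, (k i : ℝ) * x i) + ((∑ i, k i * l i : ℤ) : ℝ) := by
    push_cast
    rw [← Finset.sum_add_distrib]
    apply Finset.sum_congr rfl
    intro i _
    ring
  rw [hs]
  push_cast
  rw [mul_add, Complex.exp_add]
  have h1 : Complex.exp (-(2 * (Real.pi : ℂ) * Complex.I) * ((∑ i, k i * l i : ℤ) : ℂ)) = 1 := by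
    rw [show (-(2 * (Real.pi : ℂ) * Complex.I) * ((∑ i, k i * l i : ℤ) : ℂ))
        = ((-(∑ i, k i * l i) : ℤ) : ℂ) * (2 * (Real.pi : ℂ) * Complex.I) by push_cast; ring]
    exact Complex.exp_int_mul_two_pi_mul_I _
  rw [show ((∑ i, (k i : ℂ) * (l i : ℂ))) = ((∑ i, k i * l i : ℤ) : ℂ) by push_cast; rfl, h1, mul_one]

lemma exp_cont (k : Fin 2 → ℤ) :
    Continuous fun x : Fin 2 → ℝ =>
      Complex.exp (-(2 * (Real.pi : ℂ) * Complex.I) * ((∑ i, (k i : ℝ) * x i : ℝ) : ℂ)) := by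
  apply Complex.continuous_exp.comp
  apply Continuous.mul continuous_const
  apply Complex.continuous_ofReal.comp
  exact continuous_finset_sum _ fun i _ => continuous_const.mul (continuous_apply i)

lemma integrand_per (g : (Fin 2 → ℝ) → ℝ)
    (hper : ∀ (x : Fin 2 → ℝ) (k : Fin 2 → ℤ), g (x + fun i => (k i : ℝ)) = g x)
    (k : Fin 2 → ℤ) (x : Fin 2 → ℝ) (l : Fin 2 → ℤ) :
    (g (x + fun i => (l i : ℝ)) : ℂ) * Complex.exp (-(2 * (Real.pi : ℂ) * Complex.I) *
        ((∑ i, (k i : ℝ) * (x + fun i => (l i : ℝ)) i : ℝ) : ℂ))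
      = (g x : ℂ) * Complex.exp (-(2 * (Real.pi : ℂ) * Complex.I) *
        ((∑ i, (k i : ℝ) * x i : ℝ) : ℂ)) := by
  rw [hper x l]
  congr 1
  simpa only [Pi.add_apply] using exp_shift k x l
lemma fc_scale_dvd (g : (Fin 2 → ℝ) → ℝ) (hg : Continuous g)
    (hper : ∀ (x : Fin 2 → ℝ) (k : Fin 2 → ℤ), g (x + fun i => (k i : ℝ)) = g x)
    (N : ℕ) (hN : 0 < N) (k' : Fin 2 → ℤ) :
    fourierCoeff2 (fun x => g ((N:ℝ) • x)) (fun i => (N:ℤ) * k' i) = fourierCoeff2 g k' := by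
  unfold fourierCoeff2
  have key := per2_scale (V := ℂ)
    (fun y => (g y : ℂ) * Complex.exp (-(2 * (Real.pi : ℂ) * Complex.I) *
      ((∑ i, (k' i : ℝ) * y i : ℝ) : ℂ)))
    ((Complex.continuous_ofReal.comp hg).mul (exp_cont k'))
    (fun x l => integrand_per g hper k' x l) N hN
  rw [← key]
  apply setIntegral_congr_fun measurableSet_Icc
  intro x _
  have hsum : (∑ i, (((N:ℤ) * k' i : ℤ) : ℝ) * x i) = (∑ i, (k' i : ℝ) * (((N:ℝ) • x) i)) := by
    apply Finset.sum_congr rfl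
    intro i _
    simp only [Pi.smul_apply, smul_eq_mul]
    push_cast
    ring
  beta_reduce
  rw [hsum]

lemma fc_scale_ndvd (g : (Fin 2 → ℝ) → ℝ) (hg : Continuous g)
    (hper : ∀ (x : Fin 2 → ℝ) (k : Fin 2 → ℤ), g (x + fun i => (k i : ℝ)) = g x)
    (N : ℕ) (hN : 0 < N) (k : Fin 2 → ℤ) (j : Fin 2) (hj : ¬ ((N:ℤ) ∣ k j)) :
    fourierCoeff2 (fun x => g ((N:ℝ) • x)) k = 0 := by
  set F : (Fin 2 → ℝ) → ℂ := fun x => (g ((N:ℝ) • x) : ℂ) *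
    Complex.exp (-(2 * (Real.pi : ℂ) * Complex.I) * ((∑ i, (k i : ℝ) * x i : ℝ) : ℂ)) with hF
  have hNR : (N:ℝ) ≠ 0 := Nat.cast_ne_zero.2 hN.ne'
  have hFcont : Continuous F :=
    ((Complex.continuous_ofReal.comp (hg.comp (continuous_const_smul (N:ℝ)))).mul
      (exp_cont k))
  have hFper : ∀ (x : Fin 2 → ℝ) (l : Fin 2 → ℤ), F (x + fun i => (l i : ℝ)) = F x := by
    intro x l
    have hg' : g ((N:ℝ) • (x + fun i => (l i : ℝ))) = g ((N:ℝ) • x) := by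
      have he : (N:ℝ) • (x + fun i => (l i : ℝ))
          = ((N:ℝ) • x) + fun i => (((N:ℤ) * l i : ℤ) : ℝ) := by
        funext i
        simp only [Pi.smul_apply, Pi.add_apply, smul_eq_mul, mul_add]
        push_cast
        ring
      rw [he, hper]
    simp only [hF, hg']
    congr 1
    simpa only [Pi.add_apply] using exp_shift k x l
  set v : Fin 2 → ℝ := fun i => if i = j then (N:ℝ)⁻¹ else 0 with hv
  have hshift := per2_shift F hFcont hFper v
  set c : ℂ := Complex.exp (-(2 * (Real.pi : ℂ) * Complex.I) * ((k j : ℂ) / (N : ℂ))) with hc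
  have hpoint : ∀ x, F (x + v) = c * F x := by
    intro x
    have hgp : g ((N:ℝ) • (x + v)) = g ((N:ℝ) • x) := by
      have he : (N:ℝ) • (x + v) = ((N:ℝ) • x) + fun i => ((Pi.single j 1 : Fin 2 → ℤ) i : ℝ) := by
        funext i
        by_cases hij : i = j <;>
          simp [Pi.smul_apply, hv, hij, Pi.single_apply, mul_add, mul_inv_cancel₀ hNR]
      rw [he, hper]
    have hsum : (∑ i, (k i : ℝ) * (x + v) i) = (∑ i, (k i : ℝ) * x i) + (k j : ℝ) / (N : ℝ) := by
      simp only [Pi.add_apply, mul_add, Finset.sum_add_distrib]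
      congr 1
      rw [hv]
      simp only [mul_ite, mul_zero]
      rw [Finset.sum_ite_eq' Finset.univ j (fun i => (k i : ℝ) * (N:ℝ)⁻¹)]
      simp [div_eq_mul_inv]
    simp only [hF]
    rw [hgp, hsum]
    rw [show ((((∑ i, (k i : ℝ) * x i) + (k j : ℝ) / (N : ℝ) : ℝ)) : ℂ)
        = ((∑ i, (k i : ℝ) * x i : ℝ) : ℂ) + ((k j : ℂ) / (N : ℂ)) by push_cast; ring]
    rw [mul_add, Complex.exp_add, hc]
    ring
  have hint : ∫ x in Set.Icc (0 : Fin 2 → ℝ) 1, F (x + v)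
      = c * ∫ x in Set.Icc (0 : Fin 2 → ℝ) 1, F x := by
    simp only [hpoint]
    exact MeasureTheory.integral_const_mul c _
  have hcne : c ≠ 1 := by
    rw [hc]
    intro habs
    rw [Complex.exp_eq_one_iff] at habs
    obtain ⟨n, hn⟩ := habs
    have h2 : (2 * (Real.pi : ℂ) * Complex.I) ≠ 0 := by
      simp [Complex.I_ne_zero, Real.pi_ne_zero]
    have hn' : (-((k j : ℂ) / (N : ℂ))) = (n : ℂ) := by
      have : (-((k j : ℂ) / (N : ℂ))) * (2 * (Real.pi : ℂ) * Complex.I)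
          = (n : ℂ) * (2 * (Real.pi : ℂ) * Complex.I) := by
        rw [← hn]; ring
      exact mul_right_cancel₀ h2 this
    have hr : -((k j : ℝ) / (N : ℝ)) = (n : ℝ) := by
      have := hn'
      rw [show (-((k j : ℂ) / (N : ℂ))) = ((-((k j : ℝ) / (N : ℝ)) : ℝ) : ℂ) by push_cast; ring]
        at this
      exact_mod_cast this
    have hkj : (k j : ℝ) = ((-n * N : ℤ) : ℝ) := by
      push_cast
      field_simp at hr
      linarith
    have : k j = -n * N := by exact_mod_cast hkj
    exact hj ⟨-n, by rw [this]; ring⟩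
  have h0 : (c - 1) * ∫ x in Set.Icc (0 : Fin 2 → ℝ) 1, F x = 0 := by
    rw [sub_mul, one_mul, ← hint, hshift, sub_self]
  have := mul_eq_zero.1 h0
  rcases this with h | h
  · exact absurd (sub_eq_zero.1 h) hcne
  · exact h
lemma negSobolev_scale (g : (Fin 2 → ℝ) → ℝ) (hg : Continuous g)
    (hper : ∀ (x : Fin 2 → ℝ) (k : Fin 2 → ℤ), g (x + fun i => (k i : ℝ)) = g x)
    (N : ℕ) (hN : 0 < N) :
    negSobolevSq (fun x => g ((N:ℝ) • x)) = ENNReal.ofReal (((N:ℝ)^2)⁻¹) * negSobolevSq g := by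
  have hNZ : ((N:ℤ)) ≠ 0 := Int.natCast_ne_zero.2 hN.ne'
  set T : {k : Fin 2 → ℤ // k ≠ 0} → ENNReal := fun k =>
    ENNReal.ofReal (((2 * Real.pi) ^ 2 * ∑ i, ((k.1 i : ℝ)) ^ 2)⁻¹ *
      ‖fourierCoeff2 (fun x => g ((N:ℝ) • x)) k.1‖ ^ 2) with hT
  have hphi : ∀ k' : {k : Fin 2 → ℤ // k ≠ 0}, (fun i => (N:ℤ) * k'.1 i) ≠ (0 : Fin 2 → ℤ) := by
    intro k' habs
    apply k'.2
    funext i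
    have := congrFun habs i
    simpa [hNZ, hN.ne'] using this
  set φ : {k : Fin 2 → ℤ // k ≠ 0} → {k : Fin 2 → ℤ // k ≠ 0} :=
    fun k' => ⟨fun i => (N:ℤ) * k'.1 i, hphi k'⟩ with hφ
  have hinj : Function.Injective φ := by
    intro a b hab
    apply Subtype.ext
    funext i
    have := congrFun (congrArg Subtype.val hab) i
    exact mul_left_cancel₀ hNZ this
  have hsupp : Function.support T ⊆ Set.range φ := by
    intro k hk
    by_cases hdvd : ∀ j, (N:ℤ) ∣ k.1 j
    · refine ⟨⟨fun i => k.1 i / N, ?_⟩, ?_⟩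
      · intro habs
        apply k.2
        funext i
        have h1 := congrFun habs i
        simp only [Pi.zero_apply] at h1
        have := Int.ediv_mul_cancel (hdvd i)
        rw [h1] at this
        simpa using this.symm
      · apply Subtype.ext
        funext i
        exact Int.mul_ediv_cancel' (hdvd i)
    · exfalso
      push_neg at hdvd
      obtain ⟨j, hj⟩ := hdvd
      apply hk
      rw [hT]
      simp only
      rw [fc_scale_ndvd g hg hper N hN k.1 j hj]
      simp
  have hreindex : ∑' k, T k = ∑' k', T (φ k') := (hinj.tsum_eq hsupp).symm
  have hterm : ∀ k' : {k : Fin 2 → ℤ // k ≠ 0},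
      T (φ k') = ENNReal.ofReal (((N:ℝ)^2)⁻¹) *
        ENNReal.ofReal (((2 * Real.pi) ^ 2 * ∑ i, ((k'.1 i : ℝ)) ^ 2)⁻¹ *
          ‖fourierCoeff2 g k'.1‖ ^ 2) := by
    intro k'
    rw [hT]
    simp only [hφ]
    rw [fc_scale_dvd g hg hper N hN k'.1]
    have hsum : (∑ i, ((((N:ℤ) * k'.1 i : ℤ)) : ℝ) ^ 2) = (N:ℝ)^2 * ∑ i, ((k'.1 i : ℝ)) ^ 2 := by
      rw [Finset.mul_sum]
      apply Finset.sum_congr rfl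
      intro i _
      push_cast
      ring
    rw [hsum]
    rw [show (2 * Real.pi) ^ 2 * ((N:ℝ)^2 * ∑ i, ((k'.1 i : ℝ)) ^ 2)
        = (N:ℝ)^2 * ((2 * Real.pi) ^ 2 * ∑ i, ((k'.1 i : ℝ)) ^ 2) by ring]
    rw [mul_inv, mul_assoc]
    rw [ENNReal.ofReal_mul (by positivity)]
  calc negSobolevSq (fun x => g ((N:ℝ) • x)) = ∑' k, T k := rfl
    _ = ∑' k', T (φ k') := hreindex
    _ = ENNReal.ofReal (((N:ℝ)^2)⁻¹) * negSobolevSq g := by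
        simp only [hterm]
        rw [ENNReal.tsum_mul_left]
        rfl
section calc_helpers
variable {E : Type*} [NormedAddCommGroup E] [NormedSpace ℝ E]
  {W : Type*} [NormedAddCommGroup W] [NormedSpace ℝ W]

lemma fderiv_comp_smul' (f : E → W) (hf : Differentiable ℝ f) (c : ℝ) (x : E) :
    fderiv ℝ (fun y => f (c • y)) x = c • fderiv ℝ f (c • x) := by
  have h1 : (fun y => f (c • y)) = f ∘ (fun y : E => c • y) := rfl
  have hdiff : DifferentiableAt ℝ (fun y : E => c • y) x := by
    exact (differentiable_id.const_smul c).differentiableAt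
  rw [h1, fderiv_comp x (hf _) hdiff]
  have h2 : fderiv ℝ (fun y : E => c • y) x = c • ContinuousLinearMap.id ℝ E := by
    have h3 := fderiv_const_smul (𝕜 := ℝ) (f := fun y : E => y) (x := x) differentiableAt_id c
    rw [fderiv_id'] at h3
    exact h3
  rw [h2]
  ext v
  simp

lemma fderiv_comp_add (f : E → W) (hf : Differentiable ℝ f) (v : E) (x : E) :
    fderiv ℝ (fun y => f (y + v)) x = fderiv ℝ f (x + v) := by
  have h1 : (fun y => f (y + v)) = f ∘ (fun y : E => y + v) := rfl
  have hdiff : DifferentiableAt ℝ (fun y : E => y + v) x := by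
    simpa using (differentiable_id.add_const v).differentiableAt
  rw [h1, fderiv_comp x (hf _) hdiff]
  have h2 : fderiv ℝ (fun y : E => y + v) x = ContinuousLinearMap.id ℝ E := by
    rw [fderiv_add_const, fderiv_id']
  rw [h2, ContinuousLinearMap.comp_id]

lemma fderiv_periodic (f : E → W) (hf : Differentiable ℝ f) (v : E)
    (hper : ∀ y, f (y + v) = f y) (x : E) :
    fderiv ℝ f (x + v) = fderiv ℝ f x := by
  rw [← fderiv_comp_add f hf v x]
  congr 1
  funext y
  exact hper y

end calc_helpers

/-- The self-similar construction, case `s = 1`: patching the rescaled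
building blocks `u_n(t,x) = m^{-n} u₀(t-n, mⁿx)`, `ρ_n(t,x) = ρ₀(t-n, mⁿx)` on `[n, n+1)`
yields a solution of the continuity equation whose velocity stays bounded in `Ẇ^{1,p}([0,1]²)`
by the same constant `K`, while the functional mixing scale decays exponentially:
`‖ρ(t,·)‖_{Ḣ^{-1}} ≤ M λ^{t-1}` with `λ = 1/m`. -/
theorem stmt5 (m : ℕ) (hm : 2 ≤ m) (lam : ℝ) (hlam : lam = (m : ℝ)⁻¹)
    (p : ℝ) (hp : 1 ≤ p) (K M : ℝ) (hK : 0 ≤ K) (hM : 0 ≤ M)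
    (u₀ : ℝ × (Fin 2 → ℝ) → Fin 2 → ℝ) (ρ₀ : ℝ × (Fin 2 → ℝ) → ℝ)
    (hu₀ : ContDiff ℝ (⊤ : ℕ∞) u₀) (hρ₀ : ContDiff ℝ (⊤ : ℕ∞) ρ₀)
    (hu₀per : ∀ (t : ℝ) (x : Fin 2 → ℝ) (k : Fin 2 → ℤ), u₀ (t, x + fun i => (k i : ℝ)) = u₀ (t, x))
    (hρ₀per : ∀ (t : ℝ) (x : Fin 2 → ℝ) (k : Fin 2 → ℤ), ρ₀ (t, x + fun i => (k i : ℝ)) = ρ₀ (t, x))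
    (hdiv₀ : ∀ (t : ℝ), t ∈ Set.Icc (0:ℝ) 1 → ∀ x,
      ∑ i, fderiv ℝ (fun y => u₀ (t, y) i) x (Pi.single i 1) = 0)
    (hce₀ : ∀ (t : ℝ), t ∈ Set.Icc (0:ℝ) 1 → ∀ x,
      deriv (fun s => ρ₀ (s, x)) t
        + ∑ i, fderiv ℝ (fun y => u₀ (t, y) i * ρ₀ (t, y)) x (Pi.single i 1) = 0)
    (hself : ∀ x, ρ₀ (1, x) = ρ₀ (0, (m : ℝ) • x))
    (hmean : ∫ x in Set.Icc (0 : Fin 2 → ℝ) 1, ρ₀ (0, x) = 0)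
    (hW1p : ∀ t ∈ Set.Icc (0:ℝ) 1,
      (∫ x in Set.Icc (0 : Fin 2 → ℝ) 1, ‖fderiv ℝ (fun y => u₀ (t, y)) x‖ ^ p) ^ (1 / p) ≤ K)
    (hHm1 : ∀ t ∈ Set.Icc (0:ℝ) 1,
      negSobolevSq (fun x => ρ₀ (t, x)) ≤ ENNReal.ofReal (M ^ 2))
    (u : ℝ × (Fin 2 → ℝ) → Fin 2 → ℝ) (ρ : ℝ × (Fin 2 → ℝ) → ℝ)
    (hu : ∀ (n : ℕ) (t : ℝ), (n : ℝ) ≤ t → t < (n : ℝ) + 1 → ∀ x,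
      u (t, x) = ((m : ℝ) ^ n)⁻¹ • u₀ (t - n, ((m : ℝ) ^ n) • x))
    (hρ : ∀ (n : ℕ) (t : ℝ), (n : ℝ) ≤ t → t < (n : ℝ) + 1 → ∀ x,
      ρ (t, x) = ρ₀ (t - n, ((m : ℝ) ^ n) • x)) :
    (ContinuousOn ρ (Set.Ici (0:ℝ) ×ˢ Set.univ) ∧ ∀ x, ρ (0, x) = ρ₀ (0, x)) ∧
    (∀ n : ℕ,
      ContDiffOn ℝ (⊤ : ℕ∞) u (Set.Ioo (n : ℝ) ((n : ℝ) + 1) ×ˢ Set.univ) ∧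
      ContDiffOn ℝ (⊤ : ℕ∞) ρ (Set.Ioo (n : ℝ) ((n : ℝ) + 1) ×ˢ Set.univ) ∧
      ∀ t ∈ Set.Ioo (n : ℝ) ((n : ℝ) + 1), ∀ x,
        (∑ i, fderiv ℝ (fun y => u (t, y) i) x (Pi.single i 1) = 0) ∧
        deriv (fun s => ρ (s, x)) t
          + ∑ i, fderiv ℝ (fun y => u (t, y) i * ρ (t, y)) x (Pi.single i 1) = 0) ∧
    (∀ t : ℝ, 0 ≤ t →
      (∫ x in Set.Icc (0 : Fin 2 → ℝ) 1, ‖fderiv ℝ (fun y => u (t, y)) x‖ ^ p) ^ (1 / p) ≤ K) ∧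
    (∀ t : ℝ, 0 ≤ t →
      (negSobolevSq (fun x => ρ (t, x))) ^ (1/2 : ℝ)
        ≤ ENNReal.ofReal (M * lam ^ (t - 1))) := by
  have hm0 : (0:ℝ) < m := by
    have : (2:ℝ) ≤ m := by exact_mod_cast hm
    linarith
  have hm1 : (1:ℝ) < m := by
    have : (2:ℝ) ≤ m := by exact_mod_cast hm
    linarith
  have hc0 : ∀ n : ℕ, ((m:ℝ) ^ n) ≠ 0 := fun n => pow_ne_zero n hm0.ne'
  -- pointwise description of ρ on pairs
  have hρeq : ∀ (n : ℕ) (q : ℝ × (Fin 2 → ℝ)), (n:ℝ) ≤ q.1 → q.1 < (n:ℝ) + 1 →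
      ρ q = ρ₀ (q.1 - n, ((m:ℝ) ^ n) • q.2) := fun n q h1 h2 => hρ n q.1 h1 h2 q.2
  have hGcont : ∀ n : ℕ, Continuous fun q : ℝ × (Fin 2 → ℝ) =>
      ρ₀ (q.1 - (n:ℝ), ((m:ℝ) ^ n) • q.2) := by
    intro n
    exact hρ₀.continuous.comp
      ((continuous_fst.sub continuous_const).prodMk ((continuous_const_smul ((m:ℝ) ^ n)).comp continuous_snd))
  refine ⟨⟨?conta, ?inita⟩, ?partb, ?partc, ?partd⟩
  case conta =>
    intro q hq
    obtain ⟨hq1, -⟩ := hq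
    have hq1' : (0:ℝ) ≤ q.1 := hq1
    set n := ⌊q.1⌋₊ with hn
    have hn1 : (n:ℝ) ≤ q.1 := Nat.floor_le hq1'
    have hn2 : q.1 < (n:ℝ) + 1 := Nat.lt_floor_add_one _
    rcases eq_or_lt_of_le hn1 with heq | hlt
    · -- q.1 = n exactly
      rcases Nat.eq_zero_or_pos n with h0 | hpos
      · -- n = 0
        have heq0 : q.1 = 0 := by rw [← heq, h0]; norm_num
        have hopen : IsOpen {q' : ℝ × (Fin 2 → ℝ) | q'.1 < 1} :=
          isOpen_lt continuous_fst continuous_const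
        have hev : ρ =ᶠ[nhdsWithin q (Set.Ici (0:ℝ) ×ˢ Set.univ)]
            (fun q' => ρ₀ (q'.1 - ((0:ℕ):ℝ), ((m:ℝ) ^ (0:ℕ)) • q'.2)) := by
          filter_upwards [eventually_nhdsWithin_of_eventually_nhds
              (hopen.eventually_mem (by simp [heq0])), self_mem_nhdsWithin] with q' h1 h2
          exact hρeq 0 q' (by exact_mod_cast h2.1) (by simpa using h1)
        refine ((hGcont 0).continuousAt.continuousWithinAt).congr_of_eventuallyEq hev ?_
        exact hρeq 0 q (by exact_mod_cast hq1') (by rw [heq0]; norm_num)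
      · -- n ≥ 1 : two-sided matching
        have hA : ContinuousWithinAt ρ {q' : ℝ × (Fin 2 → ℝ) | (n:ℝ) ≤ q'.1} q := by
          have hopen : IsOpen {q' : ℝ × (Fin 2 → ℝ) | q'.1 < (n:ℝ) + 1} :=
            isOpen_lt continuous_fst continuous_const
          have hev : ρ =ᶠ[nhdsWithin q {q' : ℝ × (Fin 2 → ℝ) | (n:ℝ) ≤ q'.1}]
              (fun q' => ρ₀ (q'.1 - (n:ℝ), ((m:ℝ) ^ n) • q'.2)) := by
            filter_upwards [eventually_nhdsWithin_of_eventually_nhds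
                (hopen.eventually_mem hn2), self_mem_nhdsWithin] with q' h1 h2
            exact hρeq n q' h2 h1
          exact ((hGcont n).continuousAt.continuousWithinAt).congr_of_eventuallyEq hev
            (hρeq n q hn1 hn2)
        have hB : ContinuousWithinAt ρ {q' : ℝ × (Fin 2 → ℝ) | q'.1 < (n:ℝ)} q := by
          have hcast : ((n - 1 : ℕ) : ℝ) = (n:ℝ) - 1 := by
            rw [Nat.cast_sub hpos]; norm_num
          have hopen : IsOpen {q' : ℝ × (Fin 2 → ℝ) | (n:ℝ) - 1 < q'.1} :=
            isOpen_lt continuous_const continuous_fst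
          have hev : ρ =ᶠ[nhdsWithin q {q' : ℝ × (Fin 2 → ℝ) | q'.1 < (n:ℝ)}]
              (fun q' => ρ₀ (q'.1 - ((n - 1 : ℕ):ℝ), ((m:ℝ) ^ (n - 1)) • q'.2)) := by
            filter_upwards [eventually_nhdsWithin_of_eventually_nhds
                (hopen.eventually_mem (by simp only [Set.mem_setOf_eq, ← heq]; linarith)),
              self_mem_nhdsWithin] with q' h1 h2
            exact hρeq (n - 1) q' (by rw [hcast]; linarith [h1]) (by rw [hcast]; simpa using h2)
          refine ((hGcont (n - 1)).continuousAt.continuousWithinAt).congr_of_eventuallyEq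
            hev ?_
          rw [hρeq n q hn1 hn2]
          have h1 : q.1 - ((n - 1 : ℕ):ℝ) = 1 := by rw [hcast, ← heq]; ring
          have h2 : ((m:ℝ)) • (((m:ℝ) ^ (n-1)) • q.2) = ((m:ℝ) ^ n) • q.2 := by
            rw [smul_smul]
            congr 1
            rw [← pow_succ']
            congr 1
            omega
          have h3 : q.1 - (n:ℝ) = 0 := by rw [← heq]; ring
          rw [h1, hself, h2, h3]
        exact (hA.union hB).mono (fun q' _ => (le_or_gt (n:ℝ) q'.1).elim Or.inl Or.inr)
    · -- n < q.1 : interior of a stage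
      apply ContinuousAt.continuousWithinAt
      have hopen : IsOpen {q' : ℝ × (Fin 2 → ℝ) | (n:ℝ) < q'.1 ∧ q'.1 < (n:ℝ) + 1} :=
        (isOpen_lt continuous_const continuous_fst).inter (isOpen_lt continuous_fst continuous_const)
      have hev : (fun q' : ℝ × (Fin 2 → ℝ) => ρ₀ (q'.1 - (n:ℝ), ((m:ℝ) ^ n) • q'.2)) =ᶠ[nhds q]
          ρ := by
        filter_upwards [hopen.eventually_mem ⟨hlt, hn2⟩] with q' hq'
        exact (hρeq n q' hq'.1.le hq'.2).symm
      exact ((hGcont n).continuousAt).congr hev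
  case inita =>
    intro x
    have h := hρ 0 0 (by norm_num) (by norm_num) x
    simpa using h
  case partb =>
    intro n
    set c : ℝ := (m:ℝ) ^ n with hcdef
    have hcne : c ≠ 0 := hc0 n
    have hmap : ContDiff ℝ (⊤ : ℕ∞) fun q : ℝ × (Fin 2 → ℝ) => (q.1 - (n:ℝ), c • q.2) :=
      (contDiff_fst.sub contDiff_const).prodMk (contDiff_snd.const_smul c)
    have hopen : IsOpen (Set.Ioo (n:ℝ) ((n:ℝ) + 1) ×ˢ (Set.univ : Set (Fin 2 → ℝ))) :=
      isOpen_Ioo.prod isOpen_univ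
    refine ⟨?_, ?_, ?_⟩
    · -- smoothness of u
      have hmodel : ContDiff ℝ (⊤ : ℕ∞) fun q : ℝ × (Fin 2 → ℝ) => c⁻¹ • u₀ (q.1 - (n:ℝ), c • q.2) :=
        (hu₀.comp hmap).const_smul c⁻¹
      apply hmodel.contDiffOn.congr
      rintro ⟨t, x⟩ ⟨ht, -⟩
      exact hu n t ht.1.le ht.2 x
    · -- smoothness of ρ
      have hmodel : ContDiff ℝ (⊤ : ℕ∞) fun q : ℝ × (Fin 2 → ℝ) => ρ₀ (q.1 - (n:ℝ), c • q.2) :=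
        hρ₀.comp hmap
      apply hmodel.contDiffOn.congr
      rintro ⟨t, x⟩ ⟨ht, -⟩
      exact hρ n t ht.1.le ht.2 x
    · -- the PDE
      intro t ht x
      obtain ⟨ht1, ht2⟩ := ht
      set s : ℝ := t - n with hsdef
      have hs : s ∈ Set.Icc (0:ℝ) 1 := ⟨by simp only [hsdef]; linarith, by simp only [hsdef]; linarith⟩
      have hsliceu : ContDiff ℝ (⊤ : ℕ∞) fun y => u₀ (s, y) := hu₀.comp (contDiff_const.prodMk contDiff_id)
      have hslicer : ContDiff ℝ (⊤ : ℕ∞) fun y => ρ₀ (s, y) := hρ₀.comp (contDiff_const.prodMk contDiff_id)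
      have hU : ∀ i : Fin 2, Differentiable ℝ fun y => u₀ (s, y) i := fun i =>
        differentiable_pi.mp (hsliceu.differentiable (by simp)) i
      have hR : Differentiable ℝ fun y => ρ₀ (s, y) := hslicer.differentiable (by simp)
      constructor
      · -- divergence free
        have hterm : ∀ i : Fin 2, fderiv ℝ (fun y => u (t, y) i) x (Pi.single i 1)
            = fderiv ℝ (fun y => u₀ (s, y) i) (c • x) (Pi.single i 1) := by
          intro i
          have hufi : (fun y => u (t, y) i) = fun y => c⁻¹ * ((fun z => u₀ (s, z) i) (c • y)) := by
            funext y
            rw [hu n t ht1.le ht2 y]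
            simp [Pi.smul_apply]
            rfl
          rw [hufi]
          have hcomp : DifferentiableAt ℝ (fun y : Fin 2 → ℝ => (fun z => u₀ (s, z) i) (c • y)) x := by
            exact ((hU i).comp (differentiable_id.const_smul c)).differentiableAt
          rw [fderiv_const_mul hcomp c⁻¹]
          have h1 : fderiv ℝ (fun y : Fin 2 → ℝ => (fun z => u₀ (s, z) i) (c • y)) x
              = c • fderiv ℝ (fun z => u₀ (s, z) i) (c • x) :=
            fderiv_comp_smul' (fun z => u₀ (s, z) i) (hU i) c x
          rw [h1]
          simp [smul_smul, inv_mul_cancel₀ hcne]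
        simp only [hterm]
        exact hdiv₀ s hs (c • x)
      · -- continuity equation
        have hterm : ∀ i : Fin 2, fderiv ℝ (fun y => u (t, y) i * ρ (t, y)) x (Pi.single i 1)
            = fderiv ℝ (fun y => u₀ (s, y) i * ρ₀ (s, y)) (c • x) (Pi.single i 1) := by
          intro i
          have hprod : (fun y => u (t, y) i * ρ (t, y))
              = fun y => c⁻¹ * ((fun z => u₀ (s, z) i * ρ₀ (s, z)) (c • y)) := by
            funext y
            rw [hu n t ht1.le ht2 y, hρ n t ht1.le ht2 y]
            simp [Pi.smul_apply]
            ring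
          rw [hprod]
          have hH : Differentiable ℝ fun z => u₀ (s, z) i * ρ₀ (s, z) := (hU i).mul hR
          have hcomp : DifferentiableAt ℝ
              (fun y : Fin 2 → ℝ => (fun z => u₀ (s, z) i * ρ₀ (s, z)) (c • y)) x :=
            (hH.comp (differentiable_id.const_smul c)).differentiableAt
          rw [fderiv_const_mul hcomp c⁻¹]
          have h1 : fderiv ℝ (fun y : Fin 2 → ℝ => (fun z => u₀ (s, z) i * ρ₀ (s, z)) (c • y)) x
              = c • fderiv ℝ (fun z => u₀ (s, z) i * ρ₀ (s, z)) (c • x) :=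
            fderiv_comp_smul' (fun z => u₀ (s, z) i * ρ₀ (s, z)) hH c x
          rw [h1]
          simp [smul_smul, inv_mul_cancel₀ hcne]
        have hdt : deriv (fun s' => ρ (s', x)) t = deriv (fun s' => ρ₀ (s', c • x)) s := by
          have hev : (fun s' => ρ (s', x)) =ᶠ[nhds t]
              fun s' => (fun r => ρ₀ (r, c • x)) (s' - (n:ℝ)) := by
            filter_upwards [(isOpen_Ioo (a := (n:ℝ)) (b := (n:ℝ)+1)).eventually_mem
              ⟨ht1, ht2⟩] with s' hs'
            exact hρ n s' hs'.1.le hs'.2 x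
          rw [hev.deriv_eq]
          exact deriv_comp_sub_const (fun r => ρ₀ (r, c • x)) (n:ℝ) t
        rw [hdt]
        simp only [hterm]
        exact hce₀ s hs (c • x)
  case partc =>
    intro t ht
    set n := ⌊t⌋₊ with hn
    have hn1 : (n:ℝ) ≤ t := Nat.floor_le ht
    have hn2 : t < (n:ℝ) + 1 := Nat.lt_floor_add_one _
    set s : ℝ := t - n with hsdef
    have hs : s ∈ Set.Icc (0:ℝ) 1 := ⟨by simp only [hsdef]; linarith, by simp only [hsdef]; linarith⟩
    set c : ℝ := (m:ℝ) ^ n with hcdef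
    have hcne : c ≠ 0 := hc0 n
    set N : ℕ := m ^ n with hNdef
    have hN : 0 < N := Nat.pow_pos (by omega)
    have hNc : ((N:ℕ):ℝ) = c := by rw [hNdef, hcdef]; push_cast; ring
    have hsliceu : ContDiff ℝ (⊤ : ℕ∞) fun y => u₀ (s, y) := hu₀.comp (contDiff_const.prodMk contDiff_id)
    have hUd : Differentiable ℝ fun y => u₀ (s, y) := hsliceu.differentiable (by simp)
    have hfd : ∀ x : Fin 2 → ℝ, fderiv ℝ (fun y => u (t, y)) x
        = fderiv ℝ (fun z => u₀ (s, z)) ((N:ℝ) • x) := by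
      intro x
      have hufe : (fun y => u (t, y)) = fun y => c⁻¹ • ((fun z => u₀ (s, z)) (c • y)) := by
        funext y
        exact hu n t hn1 hn2 y
      rw [hufe]
      have hcomp : DifferentiableAt ℝ (fun y : Fin 2 → ℝ => (fun z => u₀ (s, z)) (c • y)) x :=
        (hUd.comp (differentiable_id.const_smul c)).differentiableAt
      rw [fderiv_fun_const_smul hcomp c⁻¹]
      have h1 : fderiv ℝ (fun y : Fin 2 → ℝ => (fun z => u₀ (s, z)) (c • y)) x
          = c • fderiv ℝ (fun z => u₀ (s, z)) (c • x) :=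
        fderiv_comp_smul' (fun z => u₀ (s, z)) hUd c x
      rw [h1, smul_smul, inv_mul_cancel₀ hcne, one_smul, hNc]
    have hFcont : Continuous fun y : Fin 2 → ℝ => ‖fderiv ℝ (fun z => u₀ (s, z)) y‖ ^ p := by
      apply (Real.continuous_rpow_const (by linarith)).comp
      exact (hsliceu.continuous_fderiv (by simp)).norm
    have hFper : ∀ (y : Fin 2 → ℝ) (k : Fin 2 → ℤ),
        (fun y : Fin 2 → ℝ => ‖fderiv ℝ (fun z => u₀ (s, z)) y‖ ^ p) (y + fun i => (k i : ℝ))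
          = (fun y : Fin 2 → ℝ => ‖fderiv ℝ (fun z => u₀ (s, z)) y‖ ^ p) y := by
      intro y k
      simp only
      rw [fderiv_periodic _ hUd _ (fun z => hu₀per s z k) y]
    have hkey : ∫ x in Set.Icc (0 : Fin 2 → ℝ) 1,
        ‖fderiv ℝ (fun z => u₀ (s, z)) ((N:ℝ) • x)‖ ^ p
        = ∫ x in Set.Icc (0 : Fin 2 → ℝ) 1, ‖fderiv ℝ (fun z => u₀ (s, z)) x‖ ^ p :=
      per2_scale _ hFcont hFper N hN
    calc (∫ x in Set.Icc (0 : Fin 2 → ℝ) 1, ‖fderiv ℝ (fun y => u (t, y)) x‖ ^ p) ^ (1 / p)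
        = (∫ x in Set.Icc (0 : Fin 2 → ℝ) 1,
            ‖fderiv ℝ (fun z => u₀ (s, z)) ((N:ℝ) • x)‖ ^ p) ^ (1 / p) := by
          congr 1
          apply setIntegral_congr_fun measurableSet_Icc
          intro x _
          beta_reduce
          rw [hfd x]
      _ = (∫ x in Set.Icc (0 : Fin 2 → ℝ) 1, ‖fderiv ℝ (fun z => u₀ (s, z)) x‖ ^ p) ^ (1 / p) := by
          rw [hkey]
      _ ≤ K := hW1p s hs
  case partd =>
    intro t ht
    set n := ⌊t⌋₊ with hn
    have hn1 : (n:ℝ) ≤ t := Nat.floor_le ht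
    have hn2 : t < (n:ℝ) + 1 := Nat.lt_floor_add_one _
    set s : ℝ := t - n with hsdef
    have hs : s ∈ Set.Icc (0:ℝ) 1 := ⟨by simp only [hsdef]; linarith, by simp only [hsdef]; linarith⟩
    set c : ℝ := (m:ℝ) ^ n with hcdef
    set N : ℕ := m ^ n with hNdef
    have hN : 0 < N := Nat.pow_pos (by omega)
    have hNc : ((N:ℕ):ℝ) = c := by rw [hNdef, hcdef]; push_cast; ring
    have hNpos : (0:ℝ) < (N:ℝ) := by exact_mod_cast hN
    have hgc : Continuous fun x => ρ₀ (s, x) :=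
      hρ₀.continuous.comp (continuous_const.prodMk continuous_id)
    have hgper : ∀ (x : Fin 2 → ℝ) (k : Fin 2 → ℤ),
        (fun x => ρ₀ (s, x)) (x + fun i => (k i : ℝ)) = (fun x => ρ₀ (s, x)) x :=
      fun x k => hρ₀per s x k
    have hρt : (fun x => ρ (t, x)) = fun x => (fun y => ρ₀ (s, y)) ((N:ℝ) • x) := by
      funext x
      rw [hρ n t hn1 hn2 x, hNc]
    rw [hρt, negSobolev_scale _ hgc hgper N hN]
    have hb1 : ENNReal.ofReal (((N:ℝ)^2)⁻¹) * negSobolevSq (fun y => ρ₀ (s, y))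
        ≤ ENNReal.ofReal (((N:ℝ)^2)⁻¹) * ENNReal.ofReal (M ^ 2) :=
      mul_le_mul_right (hHm1 s hs) _
    have hb2 : ENNReal.ofReal (((N:ℝ)^2)⁻¹) * ENNReal.ofReal (M ^ 2)
        = ENNReal.ofReal ((M * (N:ℝ)⁻¹) ^ 2) := by
      rw [← ENNReal.ofReal_mul (by positivity)]
      congr 1
      field_simp
    have hstep : (ENNReal.ofReal (((N:ℝ)^2)⁻¹) * negSobolevSq (fun y => ρ₀ (s, y))) ^ (1/2 : ℝ)
        ≤ ENNReal.ofReal (M * (N:ℝ)⁻¹) := by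
      calc (ENNReal.ofReal (((N:ℝ)^2)⁻¹) * negSobolevSq (fun y => ρ₀ (s, y))) ^ (1/2 : ℝ)
          ≤ (ENNReal.ofReal ((M * (N:ℝ)⁻¹) ^ 2)) ^ (1/2 : ℝ) := by
            apply ENNReal.rpow_le_rpow _ (by norm_num)
            rw [← hb2]
            exact hb1
        _ = ENNReal.ofReal (M * (N:ℝ)⁻¹) := by
            rw [ENNReal.ofReal_pow (by positivity)]
            rw [← ENNReal.rpow_natCast (ENNReal.ofReal (M * (N:ℝ)⁻¹)) 2]
            rw [← ENNReal.rpow_mul]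
            norm_num
    refine hstep.trans (ENNReal.ofReal_le_ofReal ?_)
    apply mul_le_mul_of_nonneg_left _ hM
    -- (N:ℝ)⁻¹ ≤ lam ^ (t-1)
    rw [hlam, hNc, hcdef]
    have h1 : ((m:ℝ)⁻¹) ^ (t-1) = (m:ℝ) ^ (-(t-1)) := by
      rw [Real.rpow_neg hm0.le, Real.inv_rpow hm0.le]
    have h2 : (((m:ℝ)) ^ n)⁻¹ = (m:ℝ) ^ (-(n:ℝ)) := by
      rw [← Real.rpow_natCast (m:ℝ) n, ← Real.rpow_neg hm0.le]
    rw [h1, h2]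
    exact (Real.rpow_le_rpow_left_iff hm1).mpr (by linarith)
end

section
/- Let λ > 0 and let f : ℝ² → {-1, 1} be measurable with f(x + λ k) = f(x) for all x ∈ ℝ² and k ∈ ℤ², and ∫_{[0,λ)²} f(x) dx = 0. Then for every x ∈ ℝ², taking ε = √2 λ, the ball B_ε(x) satisfies (1/(4π)) ℒ²(B_ε(x)) ≤ ℒ²({y ∈ B_ε(x) : f(y) = 1}) ≤ (1 - 1/(4π)) ℒ²(B_ε(x)), where ℒ² denotes two-dimensional Lebesgue measure. -/
/-! The cell `[0, λ)²` is a fundamental domain of the lattice `λℤ²`, hence so is each of its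
translates, and a `λℤ²`-invariant set has the same measure inside any two fundamental domains.
By the zero mean, `{f = 1}` fills half of `[0, λ)²`, so it has measure `λ²/2` inside the
translate of the cell centred at `x`, which lies in the ball of radius `√2 λ / 2 < √2 λ`.
That ball has area `2πλ²`, and `λ²/2 = (1/(4π)) · 2πλ²`; applying the same bound to `-f`
gives the upper estimate. -/

open MeasureTheory Metric Set
open scoped Pointwise

theorem MeasureTheory.IsAddFundamentalDomain.measure_inter_vadd_eq {E : Type*} [AddCommGroup E]
    [MeasurableSpace E] [MeasurableAdd E] {μ : Measure E} [μ.IsAddLeftInvariant]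
    {L : AddSubgroup E} [Countable L] {D A : Set E}
    (hD : IsAddFundamentalDomain L D μ) (hA : MeasurableSet A)
    (hAL : ∀ g ∈ L, ∀ y, g + y ∈ A ↔ y ∈ A) (v : E) :
    μ (A ∩ (v +ᵥ D)) = μ (A ∩ D) :=
  (hD.vadd_of_comm v).measure_set_eq hD hA fun g => Set.ext fun y => hAL g g.2 y

theorem measureReal_setOf_eq_one_inter_of_setIntegral_eq_zero {α : Type*} [MeasurableSpace α]
    {μ : Measure α} {f : α → ℝ} {s : Set α} (hf : Measurable f)
    (hpm : ∀ x, f x = 1 ∨ f x = -1) (hs : μ s ≠ ⊤) (hmean : ∫ x in s, f x ∂μ = 0) :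
    μ.real ({x | f x = 1} ∩ s) = μ.real s / 2 := by
  set A := {x | f x = 1}
  have hA : MeasurableSet A := hf (measurableSet_singleton 1)
  have hf_eq : f = fun x => A.indicator (fun _ => (2 : ℝ)) x - 1 := by
    funext x
    rcases hpm x with h | h <;> norm_num [A, indicator, h]
  have h2 : IntegrableOn (fun _ => (2 : ℝ)) s μ := integrableOn_const hs
  rw [hf_eq, integral_sub (h2.indicator hA) (integrableOn_const hs), integral_indicator hA,
    setIntegral_const, setIntegral_const, measureReal_restrict_apply hA] at hmean
  simp only [smul_eq_mul, mul_one] at hmean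
  linarith

theorem measureReal_setOf_eq_one_inter_add_setOf_neg_eq_one_inter {α : Type*}
    [MeasurableSpace α] {μ : Measure α} {f : α → ℝ} {s : Set α} (hf : Measurable f)
    (hpm : ∀ x, f x = 1 ∨ f x = -1) (hs : μ s ≠ ⊤) :
    μ.real ({x | f x = 1} ∩ s) + μ.real ({x | (-f) x = 1} ∩ s) = μ.real s := by
  have hneg : {x | (-f) x = 1} ∩ s = s \ {x | f x = 1} := by
    ext x
    rcases hpm x with h | h <;> norm_num [h, and_comm]
  have hA : MeasurableSet {x | f x = 1} := hf (measurableSet_singleton 1)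
  rw [hneg, inter_comm, measureReal_inter_add_sdiff hA hs]

section PeriodCell

variable {ι : Type*} [Fintype ι]

def periodCell (ι : Type*) (lam : ℝ) : Set (EuclideanSpace ℝ ι) :=
  {x | ∀ i, 0 ≤ x i ∧ x i < lam}

noncomputable def scaledBasisFun (ι : Type*) [Fintype ι] {lam : ℝ} (hlam : 0 < lam) :
    Module.Basis ι ℝ (EuclideanSpace ℝ ι) :=
  (EuclideanSpace.basisFun ι ℝ).toBasis.unitsSMul fun _ => Units.mk0 lam hlam.ne'

theorem scaledBasisFun_repr_apply {lam : ℝ} (hlam : 0 < lam) (x : EuclideanSpace ℝ ι)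
    (i : ι) :
    (scaledBasisFun ι hlam).repr x i = x i / lam := by
  simp [scaledBasisFun, Module.Basis.repr_unitsSMul, Units.smul_def, div_eq_inv_mul]

theorem fundamentalDomain_scaledBasisFun {lam : ℝ} (hlam : 0 < lam) :
    ZSpan.fundamentalDomain (scaledBasisFun ι hlam) = periodCell ι lam := by
  ext x
  simp only [ZSpan.mem_fundamentalDomain, scaledBasisFun_repr_apply, mem_Ico, periodCell,
    mem_ofPred_eq, le_div_iff₀ hlam, div_lt_one hlam, zero_mul]

theorem exists_eq_smul_of_mem_span_scaledBasisFun {lam : ℝ} (hlam : 0 < lam)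
    {g : EuclideanSpace ℝ ι} (hg : g ∈ Submodule.span ℤ (range (scaledBasisFun ι hlam))) :
    ∃ k : ι → ℤ, g = lam • (WithLp.equiv 2 (ι → ℝ)).symm fun i => (k i : ℝ) := by
  obtain ⟨k, rfl⟩ := (Submodule.mem_span_range_iff_exists_fun ℤ).mp hg
  refine ⟨k, ?_⟩
  classical
  ext i
  simp [scaledBasisFun, Module.Basis.unitsSMul_apply, Units.smul_def,
    EuclideanSpace.basisFun_apply, Pi.single_apply]

theorem volume_periodCell {lam : ℝ} (hlam : 0 ≤ lam) :
    volume (periodCell ι lam) = ENNReal.ofReal (lam ^ Fintype.card ι) := by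
  have h : periodCell ι lam
      = (MeasurableEquiv.toLp 2 (ι → ℝ)).symm ⁻¹' (univ.pi fun _ => Ico 0 lam) := by
    ext x
    simp [periodCell, MeasurableEquiv.coe_toLp_symm]
  rw [h, (EuclideanSpace.volume_preserving_symm_measurableEquiv_toLp ι).measure_preimage
    (MeasurableSet.univ_pi fun _ => measurableSet_Ico).nullMeasurableSet, volume_pi_pi]
  simp [Real.volume_Ico, ENNReal.ofReal_pow hlam]

theorem EuclideanSpace.dist_le_sqrt_card_mul {x y : EuclideanSpace ℝ ι} {c : ℝ}
    (h : ∀ i, |y i - x i| ≤ c) :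
    dist y x ≤ √(Fintype.card ι) * c := by
  have hc : ∀ i : ι, 0 ≤ c := fun i => (abs_nonneg _).trans (h i)
  calc dist y x = √(∑ i, |y i - x i| ^ 2) := by simp [EuclideanSpace.dist_eq, Real.dist_eq]
    _ ≤ √(∑ _ : ι, c ^ 2) := by gcongr with i; exact h i
    _ = √(Fintype.card ι) * c := by
      rw [Finset.sum_const, Finset.card_univ, nsmul_eq_mul, Real.sqrt_mul (Nat.cast_nonneg _)]
      cases isEmpty_or_nonempty ι with
      | inl _ => simp
      | inr hne => rw [Real.sqrt_sq (hc hne.some)]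

theorem vadd_periodCell_subset_closedBall (x : EuclideanSpace ℝ ι) (lam : ℝ) :
    (x - (WithLp.equiv 2 (ι → ℝ)).symm fun _ => lam / 2) +ᵥ periodCell ι lam
      ⊆ closedBall x (√(Fintype.card ι) * (lam / 2)) := by
  rintro _ ⟨y, hy, rfl⟩
  refine mem_closedBall.2 (EuclideanSpace.dist_le_sqrt_card_mul fun i => abs_le.2 ⟨?_, ?_⟩) <;>
    simp <;> linarith [(hy i).1, (hy i).2]

theorem measure_inter_vadd_periodCell {lam : ℝ} (hlam : 0 < lam) {A : Set (EuclideanSpace ℝ ι)}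
    (hA : MeasurableSet A)
    (hAper : ∀ (k : ι → ℤ) y,
      y + lam • (WithLp.equiv 2 (ι → ℝ)).symm (fun i => (k i : ℝ)) ∈ A ↔ y ∈ A)
    (v : EuclideanSpace ℝ ι) :
    volume (A ∩ (v +ᵥ periodCell ι lam)) = volume (A ∩ periodCell ι lam) := by
  have hD := ZSpan.isAddFundamentalDomain' (scaledBasisFun ι hlam) volume
  rw [fundamentalDomain_scaledBasisFun] at hD
  have : Countable (Submodule.span ℤ (range (scaledBasisFun ι hlam))).toAddSubgroup :=
    inferInstanceAs (Countable (Submodule.span ℤ (range (scaledBasisFun ι hlam))))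
  refine hD.measure_inter_vadd_eq hA (fun g hg y => ?_) v
  obtain ⟨k, rfl⟩ := exists_eq_smul_of_mem_span_scaledBasisFun hlam hg
  rw [add_comm]
  exact hAper k y

theorem half_volume_periodCell_le_measureReal_inter_ball {lam : ℝ} (hlam : 0 < lam)
    {f : EuclideanSpace ℝ ι → ℝ} (hmeas : Measurable f) (hpm : ∀ x, f x = 1 ∨ f x = -1)
    (hper : ∀ (x : EuclideanSpace ℝ ι) (k : ι → ℤ),
      f (x + lam • ((WithLp.equiv 2 (ι → ℝ)).symm fun i => (k i : ℝ))) = f x)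
    (hmean : ∫ x in periodCell ι lam, f x = 0) (x : EuclideanSpace ℝ ι) {r : ℝ}
    (hr : √(Fintype.card ι) * (lam / 2) < r) :
    lam ^ Fintype.card ι / 2 ≤ volume.real ({y | f y = 1} ∩ ball x r) := by
  set A := {y | f y = 1}
  have hA : MeasurableSet A := hmeas (measurableSet_singleton 1)
  have hcell : volume (periodCell ι lam) = ENNReal.ofReal (lam ^ Fintype.card ι) :=
    volume_periodCell hlam.le
  have hsub : (x - (WithLp.equiv 2 (ι → ℝ)).symm fun _ => lam / 2) +ᵥ periodCell ι lam
      ⊆ ball x r := (vadd_periodCell_subset_closedBall x lam).trans (closedBall_subset_ball hr)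
  calc lam ^ Fintype.card ι / 2 = volume.real (A ∩ periodCell ι lam) := by
        rw [measureReal_setOf_eq_one_inter_of_setIntegral_eq_zero hmeas hpm
          (by simp [hcell]) hmean, measureReal_def, hcell, ENNReal.toReal_ofReal (by positivity)]
    _ = volume.real (A ∩ ((x - (WithLp.equiv 2 (ι → ℝ)).symm fun _ => lam / 2) +ᵥ
          periodCell ι lam)) := by
        simp only [measureReal_def, measure_inter_vadd_periodCell hlam hA (fun k y => by
          simp only [A, mem_ofPred_eq, hper])]
    _ ≤ volume.real (A ∩ ball x r) := measureReal_mono (inter_subset_inter_right _ hsub)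

end PeriodCell

/-- A `±1`-valued function on `ℝ²` that is `λℤ²`-periodic and has zero mean
over the period cell `[0,λ)²` is geometrically mixed at scale `ε = √2 λ` with `κ = 1/(4π)`:
every Euclidean ball of radius `ε` contains a proportion between `1/(4π)` and `1 - 1/(4π)` of
the level set `{f = 1}`. -/
theorem stmt7 (lam : ℝ) (hlam : 0 < lam) (f : EuclideanSpace ℝ (Fin 2) → ℝ)
    (hmeas : Measurable f) (hpm : ∀ x, f x = 1 ∨ f x = -1)
    (hper : ∀ (x : EuclideanSpace ℝ (Fin 2)) (k : Fin 2 → ℤ),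
      f (x + lam • ((WithLp.equiv 2 (Fin 2 → ℝ)).symm fun i => (k i : ℝ))) = f x)
    (hmean : ∫ x in {x : EuclideanSpace ℝ (Fin 2) | ∀ i, 0 ≤ x i ∧ x i < lam}, f x = 0) :
    ∀ x : EuclideanSpace ℝ (Fin 2),
      (1 / (4 * Real.pi)) * (volume (Metric.ball x (Real.sqrt 2 * lam))).toReal
          ≤ (volume ({y | f y = 1} ∩ Metric.ball x (Real.sqrt 2 * lam))).toReal ∧
        (volume ({y | f y = 1} ∩ Metric.ball x (Real.sqrt 2 * lam))).toReal
          ≤ (1 - 1 / (4 * Real.pi)) * (volume (Metric.ball x (Real.sqrt 2 * lam))).toReal := by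
  intro x
  set B := ball x (√2 * lam)
  have hB : volume.real B = 2 * Real.pi * lam ^ 2 := by
    simp [B, measureReal_def, ENNReal.toReal_ofReal, hlam.le, Real.pi_nonneg, mul_pow]
    ring
  have hr : √(Fintype.card (Fin 2)) * (lam / 2) < √2 * lam := by
    simp only [Fintype.card_fin, Nat.cast_ofNat]
    nlinarith [Real.sqrt_pos.2 (two_pos : (0 : ℝ) < 2)]
  have hplus := half_volume_periodCell_le_measureReal_inter_ball hlam hmeas hpm hper hmean x hr
  have hminus := half_volume_periodCell_le_measureReal_inter_ball hlam hmeas.neg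
    (fun y => (hpm y).symm.imp (fun h => by simp [h]) (fun h => by simp [h]))
    (fun y k => by simp only [Pi.neg_apply, hper])
    (by simp only [Pi.neg_apply, integral_neg, neg_eq_zero]; exact hmean) x hr
  have hsplit := measureReal_setOf_eq_one_inter_add_setOf_neg_eq_one_inter hmeas hpm
    (measure_ball_lt_top (μ := volume) (x := x) (r := √2 * lam)).ne
  simp only [← measureReal_def, hB, Fintype.card_fin] at hplus hminus hsplit ⊢
  have hpi := Real.pi_pos
  constructor
  · calc 1 / (4 * Real.pi) * (2 * Real.pi * lam ^ 2) = lam ^ 2 / 2 := by field_simp; ring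
      _ ≤ _ := hplus
  · calc _ ≤ 2 * Real.pi * lam ^ 2 - lam ^ 2 / 2 := by linarith
      _ = _ := by field_simp; ring
end
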